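/- arXiv:1805.06672 — 2 statements merged into one kernel-verified Lean document; each statement's English description precedes it below -/
import Mathlib

section
/- Let n ≥ 1, η ∈ (0,1), α ∈ (0,n), and let f : ℝ^n → ℝ be continuous with finite Hölder seminorm ‖f‖_{Ċ^η} and finite BMO seminorm. Then for every natural number m_0 ≥ 1, |f(0)| ≤ C·2^{-m_0·min{n-α, η}}·(∫_{ℝ^n} |f(y)|/(|y|+1)^α dy + ‖f‖_{Ċ^η}) + C·m_0·‖f‖_{BMO}, where C depends only on n, η, α. -/
/-!
Write `A r` for the average of `f` over `ball 0 r` and telescope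
`f 0 = (f 0 - A ρ) + (A ρ - A (2 ^ N ρ)) + A (2 ^ N ρ)` with `ρ = 2⁻ᵐ`, `N = 2m`.
The Hölder bound controls the first term by `H ρ ^ η`. Passing from a ball to its double costs
at most `2 ^ n` times the mean oscillation on the double, so the middle term is at most
`N 2 ^ n B`. On `ball 0 R` the weight `(‖y‖ + 1) ^ (-α)` is at least `(R + 1) ^ (-α)`, so the
last average is at most `(R + 1) ^ α / |ball 0 R|` times the weighted integral, which for
`R = 2 ^ m` decays like `2 ^ (-m (n - α))`.
-/

open MeasureTheory Metric Real

open Module (finrank)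

section SetAverage

variable {X : Type*} [MeasurableSpace X] {μ : Measure X} {s t : Set X} {f g : X → ℝ}

theorem abs_setAverage_sub_le_setAverage_abs_sub (hs₀ : μ s ≠ 0) (hs : μ s ≠ ⊤)
    (hf : IntegrableOn f s μ) (c : ℝ) :
    |⨍ x in s, f x ∂μ - c| ≤ ⨍ x in s, |f x - c| ∂μ := by
  have hμs : μ.real s ≠ 0 := (ENNReal.toReal_pos hs₀ hs).ne'
  have hsub : ⨍ x in s, f x ∂μ - c = ⨍ x in s, (f x - c) ∂μ := by
    simp only [setAverage_eq, integral_sub hf (integrableOn_const hs), setIntegral_const,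
      smul_sub, smul_smul, inv_mul_cancel₀ hμs, one_smul]
  rw [hsub, setAverage_eq, setAverage_eq, smul_eq_mul, smul_eq_mul, abs_mul,
    abs_of_nonneg (by positivity)]
  gcongr
  exact abs_integral_le_integral_abs

theorem abs_setAverage_sub_le_of_forall_mem (hs₀ : μ s ≠ 0) (hs : μ s ≠ ⊤)
    (hsm : MeasurableSet s) (hf : IntegrableOn f s μ) {c M : ℝ}
    (hM : ∀ x ∈ s, |f x - c| ≤ M) :
    |⨍ x in s, f x ∂μ - c| ≤ M := by
  refine (abs_setAverage_sub_le_setAverage_abs_sub hs₀ hs hf c).trans ?_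
  calc ⨍ x in s, |f x - c| ∂μ ≤ ⨍ _ in s, M ∂μ := by
        rw [setAverage_eq, setAverage_eq]
        refine smul_le_smul_of_nonneg_left ?_ (by positivity)
        exact setIntegral_mono_on (hf.sub (integrableOn_const hs)).abs
          (integrableOn_const hs) hsm hM
    _ = M := setAverage_const hs₀ hs M

theorem setAverage_le_mul_setAverage_of_subset (hst : s ⊆ t) (hs₀ : μ s ≠ 0)
    (ht : μ t ≠ ⊤) (hg : IntegrableOn g t μ) (hg₀ : ∀ x, 0 ≤ g x) :
    ⨍ x in s, g x ∂μ ≤ μ.real t / μ.real s * ⨍ x in t, g x ∂μ := by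
  have hμs : 0 < μ.real s := ENNReal.toReal_pos hs₀ (measure_ne_top_of_subset hst ht)
  have hμt : μ.real t ≠ 0 := (hμs.trans_le (measureReal_mono hst ht)).ne'
  rw [setAverage_eq, setAverage_eq, smul_eq_mul, smul_eq_mul, div_mul_eq_mul_div,
    mul_inv_cancel_left₀ hμt, div_eq_inv_mul]
  refine mul_le_mul_of_nonneg_left ?_ (by positivity)
  exact setIntegral_mono_set hg (.of_forall hg₀) hst.eventuallyLE

theorem abs_setAverage_sub_setAverage_le_of_subset (hst : s ⊆ t) (hs₀ : μ s ≠ 0)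
    (ht : μ t ≠ ⊤) (hf : IntegrableOn f t μ) :
    |⨍ x in s, f x ∂μ - ⨍ x in t, f x ∂μ| ≤
      μ.real t / μ.real s * ⨍ x in t, |f x - ⨍ y in t, f y ∂μ| ∂μ :=
  (abs_setAverage_sub_le_setAverage_abs_sub hs₀ (measure_ne_top_of_subset hst ht)
    (hf.mono_set hst) _).trans <|
      setAverage_le_mul_setAverage_of_subset hst hs₀ ht
        (hf.sub (integrableOn_const ht)).abs fun _ ↦ abs_nonneg _

end SetAverage

theorem abs_setAverage_ball_zero_le_mul_integral {E : Type*} [NormedAddCommGroup E]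
    [MeasurableSpace E] [OpensMeasurableSpace E] (μ : Measure E) {f : E → ℝ} {α R : ℝ}
    (hα : 0 ≤ α) (hR : 0 ≤ R)
    (hw : Integrable (fun y ↦ |f y| / (‖y‖ + 1) ^ α) μ) :
    |⨍ y in ball 0 R, f y ∂μ| ≤
      (R + 1) ^ α / μ.real (ball 0 R) * ∫ y, |f y| / (‖y‖ + 1) ^ α ∂μ := by
  have hweight :
      ∀ y ∈ ball (0 : E) R, |f y| ≤ (R + 1) ^ α * (|f y| / (‖y‖ + 1) ^ α) := by
    intro y hy
    have hy' : ‖y‖ + 1 ≤ R + 1 := by linarith [mem_ball_zero_iff.1 hy]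
    calc |f y| = (‖y‖ + 1) ^ α * (|f y| / (‖y‖ + 1) ^ α) := by
          rw [mul_div_cancel₀ _ (by positivity)]
      _ ≤ _ := by gcongr
  calc |⨍ y in ball 0 R, f y ∂μ|
      ≤ (μ.real (ball 0 R))⁻¹ *
          ∫ y in ball 0 R, (R + 1) ^ α * (|f y| / (‖y‖ + 1) ^ α) ∂μ := by
        rw [setAverage_eq, smul_eq_mul, abs_mul, abs_of_nonneg (by positivity)]
        refine mul_le_mul_of_nonneg_left (abs_integral_le_integral_abs.trans ?_) (by positivity)
        exact integral_mono_of_nonneg (.of_forall fun _ ↦ abs_nonneg _)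
          (hw.const_mul _).integrableOn
          ((ae_restrict_iff' measurableSet_ball).2 (.of_forall hweight))
    _ ≤ (μ.real (ball 0 R))⁻¹ * ((R + 1) ^ α * ∫ y, |f y| / (‖y‖ + 1) ^ α ∂μ) := by
        rw [integral_const_mul]
        refine mul_le_mul_of_nonneg_left (mul_le_mul_of_nonneg_left ?_ (by positivity))
          (by positivity)
        exact setIntegral_le_integral hw (.of_forall fun _ ↦ by positivity)
    _ = _ := by ring

theorem inv_two_pow_rpow_le {η κ : ℝ} (hκ : κ ≤ η) (m : ℕ) :
    ((2 : ℝ) ^ m)⁻¹ ^ η ≤ 2 ^ (-(m : ℝ) * κ) := by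
  rw [inv_rpow (by positivity), ← rpow_natCast, ← rpow_mul zero_le_two,
    ← rpow_neg zero_le_two]
  exact rpow_le_rpow_of_exponent_le one_le_two (by nlinarith [(m.cast_nonneg : (0 : ℝ) ≤ m)])

theorem two_pow_add_one_rpow_div_pow_le {α κ : ℝ} (hα : 0 ≤ α) {n : ℕ}
    (hκ : κ ≤ n - α) (m : ℕ) :
    ((2 : ℝ) ^ m + 1) ^ α / (2 ^ m) ^ n ≤ 2 ^ α * 2 ^ (-(m : ℝ) * κ) := by
  have hdouble : ((2 : ℝ) ^ m + 1) ^ α ≤ 2 ^ α * (2 ^ m) ^ α := by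
    rw [← mul_rpow zero_le_two (by positivity)]
    gcongr
    linarith [one_le_pow₀ (M₀ := ℝ) (n := m) one_le_two]
  have hdecay : ((2 : ℝ) ^ m) ^ α / (2 ^ m) ^ n ≤ 2 ^ (-(m : ℝ) * κ) := by
    rw [← rpow_natCast ((2 : ℝ) ^ m) n, ← rpow_sub (by positivity), ← rpow_natCast 2 m,
      ← rpow_mul zero_le_two]
    exact rpow_le_rpow_of_exponent_le one_le_two (by nlinarith [(m.cast_nonneg : (0 : ℝ) ≤ m)])
  calc ((2 : ℝ) ^ m + 1) ^ α / (2 ^ m) ^ n ≤ 2 ^ α * (2 ^ m) ^ α / (2 ^ m) ^ n := by gcongr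
    _ ≤ 2 ^ α * 2 ^ (-(m : ℝ) * κ) := by rw [mul_div_assoc]; gcongr

theorem nonneg_of_abs_sub_le_mul_norm_sub_rpow {E : Type*} [NormedAddCommGroup E]
    [NormedSpace ℝ E] [Nontrivial E] {f : E → ℝ} {H η : ℝ}
    (hf : ∀ x y, |f x - f y| ≤ H * ‖x - y‖ ^ η) : 0 ≤ H := by
  obtain ⟨x, hx⟩ := exists_norm_eq E zero_le_one
  simpa [hx] using (abs_nonneg _).trans (hf x 0)

theorem measureReal_ball_pos {X : Type*} [PseudoMetricSpace X] [ProperSpace X]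
    [MeasurableSpace X] (μ : Measure X) [μ.IsOpenPosMeasure] [IsFiniteMeasureOnCompacts μ]
    (x : X) {r : ℝ} (hr : 0 < r) : 0 < μ.real (ball x r) :=
  ENNReal.toReal_pos (measure_ball_pos μ x hr).ne' measure_ball_lt_top.ne

section AddHaar

variable {E : Type*} [NormedAddCommGroup E] [NormedSpace ℝ E] [FiniteDimensional ℝ E]
  [MeasurableSpace E] [BorelSpace E] (μ : Measure E) [μ.IsAddHaarMeasure] {f : E → ℝ}

theorem addHaar_real_ball_of_pos (x : E) {r : ℝ} (hr : 0 < r) :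
    μ.real (ball x r) = r ^ finrank ℝ E * μ.real (ball 0 1) := by
  rw [measureReal_def, Measure.addHaar_ball_of_pos μ x hr, ENNReal.toReal_mul,
    ENNReal.toReal_ofReal (by positivity), measureReal_def]

theorem abs_setAverage_ball_sub_setAverage_ball_two_mul_le (x : E) {r : ℝ} (hr : 0 < r)
    (hf : IntegrableOn f (ball x (2 * r)) μ) :
    |⨍ y in ball x r, f y ∂μ - ⨍ y in ball x (2 * r), f y ∂μ| ≤
      2 ^ finrank ℝ E *
        ⨍ y in ball x (2 * r), |f y - ⨍ z in ball x (2 * r), f z ∂μ| ∂μ := by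
  have hratio : μ.real (ball x (2 * r)) / μ.real (ball x r) = 2 ^ finrank ℝ E := by
    have hω := measureReal_ball_pos μ (0 : E) one_pos
    rw [addHaar_real_ball_of_pos μ x (by positivity), addHaar_real_ball_of_pos μ x hr, mul_pow]
    field_simp
  rw [← hratio]
  exact abs_setAverage_sub_setAverage_le_of_subset (ball_subset_ball (by linarith))
    (measure_ball_pos μ x hr).ne' measure_ball_lt_top.ne hf

theorem abs_setAverage_ball_sub_setAverage_ball_two_pow_mul_le (x : E) {r B : ℝ}
    (hr : 0 < r) (hf : LocallyIntegrable f μ)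
    (hB : ∀ ρ, 0 < ρ → ⨍ y in ball x ρ, |f y - ⨍ z in ball x ρ, f z ∂μ| ∂μ ≤ B)
    (N : ℕ) :
    |⨍ y in ball x r, f y ∂μ - ⨍ y in ball x (2 ^ N * r), f y ∂μ| ≤
      N * (2 ^ finrank ℝ E * B) := by
  induction N with
  | zero => simp
  | succ N ih =>
    have hN : 0 < 2 ^ N * r := by positivity
    have hstep := abs_setAverage_ball_sub_setAverage_ball_two_mul_le μ x hN
      (hf.integrableOn_isCompact (isCompact_closedBall x _) |>.mono_set ball_subset_closedBall)
    rw [← mul_assoc, ← pow_succ'] at hstep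
    calc _ ≤ _ := abs_sub_le _ (⨍ y in ball x (2 ^ N * r), f y ∂μ) _
      _ ≤ N * (2 ^ finrank ℝ E * B) + 2 ^ finrank ℝ E * B := by
          gcongr
          refine hstep.trans (mul_le_mul_of_nonneg_left ?_ (by positivity))
          simpa [← mul_assoc, ← pow_succ'] using hB _ (by positivity)
      _ = _ := by push_cast; ring

theorem abs_apply_zero_le_of_holder_of_bmo {H η B α ρ : ℝ} (hf : LocallyIntegrable f μ)
    (hH : 0 ≤ H) (hη : 0 ≤ η) (hHol : ∀ y, |f y - f 0| ≤ H * ‖y‖ ^ η)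
    (hBMO : ∀ r, 0 < r → ⨍ y in ball 0 r, |f y - ⨍ z in ball 0 r, f z ∂μ| ∂μ ≤ B)
    (hα : 0 ≤ α) (hw : Integrable (fun y ↦ |f y| / (‖y‖ + 1) ^ α) μ) (hρ : 0 < ρ)
    (N : ℕ) :
    |f 0| ≤ H * ρ ^ η + N * (2 ^ finrank ℝ E * B) +
      (2 ^ N * ρ + 1) ^ α / μ.real (ball 0 (2 ^ N * ρ)) *
        ∫ y, |f y| / (‖y‖ + 1) ^ α ∂μ := by
  set a := ⨍ y in ball 0 ρ, f y ∂μ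
  set b := ⨍ y in ball 0 (2 ^ N * ρ), f y ∂μ
  have hinner : |a - f 0| ≤ H * ρ ^ η :=
    abs_setAverage_sub_le_of_forall_mem (measure_ball_pos μ 0 hρ).ne' measure_ball_lt_top.ne
      measurableSet_ball (hf.integrableOn_isCompact (isCompact_closedBall 0 ρ)
        |>.mono_set ball_subset_closedBall) fun y hy ↦ (hHol y).trans <| by
          gcongr; exact (mem_ball_zero_iff.1 hy).le
  have hchain : |a - b| ≤ N * (2 ^ finrank ℝ E * B) :=
    abs_setAverage_ball_sub_setAverage_ball_two_pow_mul_le μ 0 hρ hf hBMO N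
  have houter :=
    abs_setAverage_ball_zero_le_mul_integral μ hα (by positivity : 0 ≤ 2 ^ N * ρ) hw
  rw [abs_sub_comm] at hinner
  linarith [abs_sub_le (f 0) a b, abs_sub_abs_le_abs_sub (f 0) b]

theorem abs_apply_zero_le_of_holder_of_bmo_dyadic {H η B α κ : ℝ}
    (hf : LocallyIntegrable f μ) (hH : 0 ≤ H) (hη : 0 ≤ η)
    (hHol : ∀ y, |f y - f 0| ≤ H * ‖y‖ ^ η)
    (hBMO : ∀ r, 0 < r → ⨍ y in ball 0 r, |f y - ⨍ z in ball 0 r, f z ∂μ| ∂μ ≤ B)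
    (hα : 0 ≤ α) (hw : Integrable (fun y ↦ |f y| / (‖y‖ + 1) ^ α) μ)
    (hκη : κ ≤ η) (hκα : κ ≤ finrank ℝ E - α) (m : ℕ) :
    |f 0| ≤ (H + 2 ^ α / μ.real (ball 0 1) * ∫ y, |f y| / (‖y‖ + 1) ^ α ∂μ) *
        2 ^ (-(m : ℝ) * κ) + m * (2 * 2 ^ finrank ℝ E * B) := by
  have hω := measureReal_ball_pos μ (0 : E) one_pos
  have hI : 0 ≤ ∫ y, |f y| / (‖y‖ + 1) ^ α ∂μ := integral_nonneg fun y ↦ by positivity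
  have hscale : (2 : ℝ) ^ (2 * m) * ((2 : ℝ) ^ m)⁻¹ = 2 ^ m := by
    rw [two_mul, pow_add]; field_simp
  have key := abs_apply_zero_le_of_holder_of_bmo μ hf hH hη hHol hBMO hα hw
    (ρ := ((2 : ℝ) ^ m)⁻¹) (by positivity) (2 * m)
  rw [hscale, addHaar_real_ball_of_pos μ 0 (by positivity), ← div_div] at key
  have hinner : H * ((2 : ℝ) ^ m)⁻¹ ^ η ≤ H * 2 ^ (-(m : ℝ) * κ) := by
    gcongr; exact inv_two_pow_rpow_le hκη m
  have houter : (2 ^ m + 1) ^ α / (2 ^ m) ^ finrank ℝ E / μ.real (ball (0 : E) 1) ≤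
      2 ^ α / μ.real (ball (0 : E) 1) * 2 ^ (-(m : ℝ) * κ) := by
    rw [div_mul_eq_mul_div]; gcongr; exact two_pow_add_one_rpow_div_pow_le hα hκα m
  push_cast at key
  nlinarith [mul_le_mul_of_nonneg_right houter hI]

end AddHaar

theorem BGW_BMO_pointwise_general (n : ℕ) (η α : ℝ)
    (hη : η ∈ Set.Ioo (0 : ℝ) 1) (hα : α ∈ Set.Ioo (0 : ℝ) (n : ℝ)) :
    ∃ C : ℝ, 0 < C ∧
      ∀ (f : EuclideanSpace ℝ (Fin n) → ℝ) (Hη B : ℝ),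
        Continuous f →
        (∀ x y, |f x - f y| ≤ Hη * ‖x - y‖ ^ η) →
        (∀ (z : EuclideanSpace ℝ (Fin n)) (r : ℝ), 0 < r →
          ⨍ x in ball z r, |f x - ⨍ y in ball z r, f y ∂volume| ∂volume ≤ B) →
        Integrable (fun y : EuclideanSpace ℝ (Fin n) => |f y| / (‖y‖ + 1) ^ α) →
        ∀ m₀ : ℕ, 1 ≤ m₀ →
          |f 0| ≤ C * 2 ^ (-(m₀ : ℝ) * min ((n : ℝ) - α) η)
                * ((∫ y, |f y| / (‖y‖ + 1) ^ α ∂volume) + Hη)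
              + C * m₀ * B := by
  -- makes the space nontrivial, so that the Hölder bound forces `0 ≤ Hη`
  have : Nonempty (Fin n) := ⟨⟨0, by exact_mod_cast hα.1.trans hα.2⟩⟩
  set ω := volume.real (ball (0 : EuclideanSpace ℝ (Fin n)) 1)
  have hω : 0 < ω := measureReal_ball_pos volume 0 one_pos
  refine ⟨2 * 2 ^ n + 2 ^ α / ω, by positivity, ?_⟩
  intro f H B hf hHol hBMO hw m₀ _
  have hH : 0 ≤ H := nonneg_of_abs_sub_le_mul_norm_sub_rpow hHol
  have hB : 0 ≤ B :=
    le_trans (by rw [setAverage_eq, smul_eq_mul]; positivity) (hBMO 0 1 one_pos)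
  have hI : 0 ≤ ∫ y, |f y| / (‖y‖ + 1) ^ α := integral_nonneg fun y ↦ by positivity
  have key := abs_apply_zero_le_of_holder_of_bmo_dyadic volume hf.locallyIntegrable hH hη.1.le
    (fun y ↦ by simpa using hHol y 0) (hBMO 0) hα.1.le hw (min_le_right _ η)
    (by rw [finrank_euclideanSpace_fin]; exact min_le_left _ η) m₀
  rw [finrank_euclideanSpace_fin] at key
  have hP : 0 < (2 : ℝ) ^ (-(m₀ : ℝ) * min ((n : ℝ) - α) η) := by positivity
  have h2n : (1 : ℝ) ≤ 2 * 2 ^ n := by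
    linarith [one_le_pow₀ (M₀ := ℝ) (n := n) one_le_two]
  have hαω : 0 ≤ (2 : ℝ) ^ α / ω := by positivity
  nlinarith [mul_nonneg (mul_nonneg hP.le hI) (zero_le_one.trans h2n),
    mul_nonneg (mul_nonneg hP.le hH) (add_nonneg (sub_nonneg.2 h2n) hαω),
    mul_nonneg (mul_nonneg hαω m₀.cast_nonneg) hB]

/-- Pointwise dyadic estimate behind the BGW inequality with BMO:
`|f(0)| ≤ C 2^{-m₀ min{n-α,η}} (∫ |f(y)|/(|y|+1)^α dy + ‖f‖_{Ċ^η}) + C m₀ ‖f‖_BMO`. -/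
theorem BGW_BMO_pointwise (n : ℕ) (hn : 1 ≤ n) (η α : ℝ)
    (hη : η ∈ Set.Ioo (0 : ℝ) 1) (hα : α ∈ Set.Ioo (0 : ℝ) (n : ℝ)) :
    ∃ C : ℝ, 0 < C ∧
      ∀ (f : EuclideanSpace ℝ (Fin n) → ℝ) (Hη B : ℝ),
        Continuous f →
        (∀ x y, |f x - f y| ≤ Hη * ‖x - y‖ ^ η) →
        (∀ (z : EuclideanSpace ℝ (Fin n)) (r : ℝ), 0 < r →
          ⨍ x in ball z r, |f x - ⨍ y in ball z r, f y ∂volume| ∂volume ≤ B) →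
        Integrable (fun y : EuclideanSpace ℝ (Fin n) => |f y| / (‖y‖ + 1) ^ α) →
        ∀ m₀ : ℕ, 1 ≤ m₀ →
          |f 0| ≤ C * 2 ^ (-(m₀ : ℝ) * min ((n : ℝ) - α) η)
                * ((∫ y, |f y| / (‖y‖ + 1) ^ α ∂volume) + Hη)
              + C * m₀ * B :=
  BGW_BMO_pointwise_general n η α hη hα
end

section
/- Let n ≥ 1, p ≥ 1, and let k ≥ 1 with n = kp. Let E_l = B(0, 2^{k+l+3}) \ B(0, 2^{l-1}). Then there is a constant C = C(n, k, p) such that for any g ∈ L^p(ℝ^n) and any integers m_0 ≥ 1, ∑_{l=-m_0}^{m_0-1} 2^{kl}·(1/|E_l|)∫_{E_l} |g(y)| dy ≤ C·m_0^{(p-1)/p}·‖g‖_{L^p(ℝ^n)}. -/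
/-! On each annulus `E_l`, Hölder's inequality bounds the average of `|g|` by
`|E_l|^{-1/p} ‖g‖_{L^p(E_l)}`. As `E_l ⊇ B(0, 2^l) \ B(0, 2^{l-1})`, we have `|E_l| ≥ c 2^{ln}`,
and the critical scaling `n = kp` makes `2^{kl} |E_l|^{-1/p}` bounded uniformly in `l`.
The discrete Hölder inequality then bounds `∑_l ‖g‖_{L^p(E_l)}` by
`(2m₀)^{(p-1)/p} (∑_l ‖g‖_{L^p(E_l)}^p)^{1/p}`, and since every point lies in at most `k + 4`
of the annuli, `∑_l ‖g‖_{L^p(E_l)}^p ≤ (k + 4) ‖g‖_p^p`. -/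

open MeasureTheory Metric Finset Real
open scoped ENNReal

namespace MeasureTheory

variable {α ι : Type*} [MeasurableSpace α] {μ : Measure α}

theorem sum_setLIntegral_le_mul_lintegral {A : ι → Set α} {N : ℕ}
    (hA : ∀ i, MeasurableSet (A i)) (hN : ∀ x, {i | x ∈ A i}.encard ≤ N)
    (s : Finset ι) (F : α → ℝ≥0∞) :
    ∑ i ∈ s, ∫⁻ x in A i, F x ∂μ ≤ N * ∫⁻ x, F x ∂μ :=
  calc ∑ i ∈ s, ∫⁻ x in A i, F x ∂μ
      ≤ ∑' i, ∫⁻ x in A i, F x ∂μ := ENNReal.sum_le_tsum s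
    _ = ∫⁻ x, F x ∂Measure.sum (fun i ↦ μ.restrict (A i)) := (lintegral_sum_measure _ _).symm
    _ ≤ ∫⁻ x, F x ∂(N • μ.restrict (⋃ i, A i)) :=
        lintegral_mono' (Measure.sum_restrict_le hA hN) le_rfl
    _ ≤ N * ∫⁻ x, F x ∂μ := by
        rw [lintegral_smul_measure, nsmul_eq_mul]
        gcongr
        exact Measure.restrict_le_self

theorem sum_eLpNorm_restrict_le {E : Type*} [NormedAddCommGroup E] {p : ℝ} (hp : 1 ≤ p)
    {A : ι → Set α} {N : ℕ} (hA : ∀ i, MeasurableSet (A i))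
    (hN : ∀ x, {i | x ∈ A i}.encard ≤ N) (s : Finset ι) (f : α → E) :
    ∑ i ∈ s, eLpNorm f (.ofReal p) (μ.restrict (A i))
      ≤ (#s : ℝ≥0∞) ^ ((p - 1) / p) * (N : ℝ≥0∞) ^ (1 / p) * eLpNorm f (.ofReal p) μ := by
  have hp0 : 0 < p := one_pos.trans_le hp
  have hpow : ∀ ν : Measure α, eLpNorm f (.ofReal p) ν ^ p = ∫⁻ x, ‖f x‖ₑ ^ p ∂ν := fun ν ↦ by
    rw [eLpNorm_eq_eLpNorm' (by simpa using hp0) ENNReal.ofReal_ne_top,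
      ENNReal.toReal_ofReal hp0.le, lintegral_rpow_enorm_eq_rpow_eLpNorm' hp0]
  rw [← ENNReal.rpow_le_rpow_iff hp0]
  calc (∑ i ∈ s, eLpNorm f (.ofReal p) (μ.restrict (A i))) ^ p
      ≤ (#s : ℝ≥0∞) ^ (p - 1) * ∑ i ∈ s, eLpNorm f (.ofReal p) (μ.restrict (A i)) ^ p :=
        ENNReal.rpow_sum_le_const_mul_sum_rpow _ _ hp
    _ ≤ (#s : ℝ≥0∞) ^ (p - 1) * (N * eLpNorm f (.ofReal p) μ ^ p) := by
        simp only [hpow]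
        gcongr
        exact sum_setLIntegral_le_mul_lintegral hA hN s _
    _ = ((#s : ℝ≥0∞) ^ ((p - 1) / p) * (N : ℝ≥0∞) ^ (1 / p) * eLpNorm f (.ofReal p) μ) ^ p := by
        simp only [ENNReal.mul_rpow_of_nonneg _ _ hp0.le, ← ENNReal.rpow_mul]
        field_simp
        rw [ENNReal.rpow_one, mul_assoc]

theorem setLAverage_enorm_le_eLpNorm_div {E : Type*} [NormedAddCommGroup E] {p : ℝ}
    (hp : 1 ≤ p) {s : Set α} (hs0 : μ s ≠ 0) (hsT : μ s ≠ ∞) {f : α → E}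
    (hf : AEStronglyMeasurable f (μ.restrict s)) :
    ⨍⁻ x in s, ‖f x‖ₑ ∂μ ≤ eLpNorm f (.ofReal p) (μ.restrict s) / μ s ^ (1 / p) := by
  have hp0 : 0 < p := one_pos.trans_le hp
  have holder := eLpNorm_le_eLpNorm_mul_rpow_measure_univ
    (p := 1) (q := .ofReal p) (by simpa using hp) hf
  rw [eLpNorm_one_eq_lintegral_enorm, Measure.restrict_apply_univ, ENNReal.toReal_one,
    ENNReal.toReal_ofReal hp0.le, one_div_one] at holder
  rw [setLAverage_eq, ENNReal.div_le_iff hs0 hsT]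
  calc ∫⁻ x in s, ‖f x‖ₑ ∂μ ≤ eLpNorm f (.ofReal p) (μ.restrict s) * μ s ^ (1 - 1 / p) := holder
    _ = eLpNorm f (.ofReal p) (μ.restrict s) / μ s ^ (1 / p) * μ s := by
        rw [sub_eq_neg_add, ENNReal.rpow_add _ _ hs0 hsT, ENNReal.rpow_one,
          ENNReal.div_eq_inv_mul, ← ENNReal.rpow_neg]
        ring

theorem toReal_ofReal_mul_setLAverage_enorm {c : ℝ} (hc : 0 ≤ c) {s : Set α} {f : α → ℝ}
    (hf : AEStronglyMeasurable f (μ.restrict s)) :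
    (ENNReal.ofReal c * ⨍⁻ x in s, ‖f x‖ₑ ∂μ).toReal = c * ⨍ x in s, |f x| ∂μ := by
  rw [ENNReal.toReal_mul, ENNReal.toReal_ofReal hc,
    toReal_setLAverage hf.enorm (.of_forall fun _ ↦ enorm_ne_top)]
  simp [toReal_enorm, Real.norm_eq_abs]

namespace Measure

variable {E : Type*} [NormedAddCommGroup E] [NormedSpace ℝ E] [MeasurableSpace E] [BorelSpace E]
  [FiniteDimensional ℝ E] (μ : Measure E) [μ.IsAddHaarMeasure]

theorem addHaar_ball_le_addHaar_ball_two_mul_diff [Nontrivial E] (x : E) (r : ℝ) :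
    μ (ball x r) ≤ μ (ball x (2 * r) \ ball x r) := by
  rcases le_or_gt r 0 with hr | hr
  · simp [ball_eq_empty.2 hr]
  have hdouble : 2 * μ (ball x r) ≤ μ (ball x (2 * r)) := by
    rw [addHaar_ball_mul μ x zero_le_two, addHaar_ball_center]
    gcongr
    rw [← ENNReal.ofReal_ofNat]
    exact ENNReal.ofReal_le_ofReal (le_self_pow₀ one_le_two Module.finrank_pos.ne')
  rw [measure_sdiff (ball_subset_ball (by linarith)) measurableSet_ball.nullMeasurableSet
    measure_ball_lt_top.ne]
  exact ENNReal.le_sub_of_add_le_right measure_ball_lt_top.ne (by rwa [← two_mul])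

theorem addHaar_ball_rpow_one_div {k : ℕ} {p : ℝ} (hp : 0 < p)
    (hd : (Module.finrank ℝ E : ℝ) = k * p) (x : E) {r : ℝ} (hr : 0 < r) :
    μ (ball x r) ^ (1 / p) = ENNReal.ofReal (r ^ k) * μ (ball 0 1) ^ (1 / p) := by
  rw [addHaar_ball_of_pos μ x hr, ENNReal.mul_rpow_of_nonneg _ _ (by positivity),
    ENNReal.ofReal_rpow_of_nonneg (by positivity) (by positivity), ← Real.rpow_natCast,
    ← Real.rpow_mul hr.le, hd, mul_one_div,
    mul_div_cancel_right₀ _ hp.ne', Real.rpow_natCast]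

end Measure

end MeasureTheory

section DyadicAnnulus

variable (E : Type*) [NormedAddCommGroup E]

def dyadicAnnulus (k : ℕ) (l : ℤ) : Set E :=
  ball (0 : E) ((2 : ℝ) ^ ((k : ℤ) + l + 3)) \ ball (0 : E) ((2 : ℝ) ^ (l - 1))

variable {E}

theorem mem_dyadicAnnulus {k : ℕ} {l : ℤ} {y : E} :
    y ∈ dyadicAnnulus E k l ↔ (2 : ℝ) ^ (l - 1) ≤ ‖y‖ ∧ ‖y‖ < (2 : ℝ) ^ ((k : ℤ) + l + 3) := by
  simp [dyadicAnnulus, and_comm]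

theorem encard_setOf_mem_dyadicAnnulus_le (k : ℕ) (y : E) :
    {l | y ∈ dyadicAnnulus E k l}.encard ≤ k + 4 := by
  set j := Int.log 2 ‖y‖
  have hsub : {l | y ∈ dyadicAnnulus E k l} ⊆ Set.Icc (j - k - 2) (j + 1) := by
    intro l hl
    obtain ⟨hlow, hhigh⟩ := mem_dyadicAnnulus.1 hl
    have hy : 0 < ‖y‖ := (zpow_pos two_pos _).trans_le hlow
    have h1 : (2 : ℝ) ^ (l - 1) < (2 : ℝ) ^ (j + 1) :=
      hlow.trans_lt (by exact_mod_cast Int.lt_zpow_succ_log_self one_lt_two ‖y‖)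
    have h2 : (2 : ℝ) ^ j < (2 : ℝ) ^ ((k : ℤ) + l + 3) :=
      lt_of_le_of_lt (by exact_mod_cast Int.zpow_log_le_self one_lt_two hy) hhigh
    rw [zpow_lt_zpow_iff_right₀ one_lt_two] at h1 h2
    exact ⟨by omega, by omega⟩
  calc {l | y ∈ dyadicAnnulus E k l}.encard ≤ (Set.Icc (j - k - 2) (j + 1)).encard :=
        Set.encard_le_encard hsub
    _ = k + 4 := by
        rw [← Finset.coe_Icc, Set.encard_coe_eq_coe_finsetCard, Int.card_Icc]
        norm_cast
        omega

theorem measurableSet_dyadicAnnulus [MeasurableSpace E] [OpensMeasurableSpace E] (k : ℕ) (l : ℤ) :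
    MeasurableSet (dyadicAnnulus E k l) :=
  measurableSet_ball.diff measurableSet_ball

theorem measure_dyadicAnnulus_ne_top [MeasurableSpace E] [ProperSpace E] (μ : Measure E)
    [IsFiniteMeasureOnCompacts μ] (k : ℕ) (l : ℤ) : μ (dyadicAnnulus E k l) ≠ ∞ :=
  (measure_mono Set.sdiff_subset).trans_lt measure_ball_lt_top |>.ne

variable [NormedSpace ℝ E] [MeasurableSpace E] [BorelSpace E] [FiniteDimensional ℝ E]
  (μ : Measure E) [μ.IsAddHaarMeasure]

theorem addHaar_ball_le_addHaar_dyadicAnnulus [Nontrivial E] (k : ℕ) (l : ℤ) :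
    μ (ball 0 ((2 : ℝ) ^ (l - 1))) ≤ μ (dyadicAnnulus E k l) := by
  refine (μ.addHaar_ball_le_addHaar_ball_two_mul_diff 0 _).trans (measure_mono ?_)
  refine Set.sdiff_subset_sdiff_left (ball_subset_ball ?_)
  rw [← zpow_one_add₀ two_ne_zero]
  exact zpow_le_zpow_right₀ one_le_two (by omega)

theorem ofReal_two_zpow_mul_setLAverage_dyadicAnnulus_le [Nontrivial E] {k : ℕ} {p : ℝ}
    (hp : 1 ≤ p) (hd : (Module.finrank ℝ E : ℝ) = k * p) {F : Type*} [NormedAddCommGroup F]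
    {g : E → F} (hg : AEStronglyMeasurable g μ) (l : ℤ) :
    ENNReal.ofReal ((2 : ℝ) ^ ((k : ℤ) * l)) * ⨍⁻ y in dyadicAnnulus E k l, ‖g y‖ₑ ∂μ
      ≤ 2 ^ k / μ (ball 0 1) ^ (1 / p)
        * eLpNorm g (.ofReal p) (μ.restrict (dyadicAnnulus E k l)) := by
  set A := dyadicAnnulus E k l
  set r : ℝ := 2 ^ (l - 1)
  have hr : 0 < r := zpow_pos two_pos _
  have hA0 : μ A ≠ 0 :=
    ((measure_ball_pos μ 0 hr).trans_le (addHaar_ball_le_addHaar_dyadicAnnulus μ k l)).ne'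
  have hscale : (2 : ℝ) ^ ((k : ℤ) * l) = 2 ^ k * r ^ k := by
    rw [← mul_pow, ← zpow_one_add₀ two_ne_zero, add_sub_cancel, ← zpow_natCast, ← zpow_mul,
      mul_comm]
  calc ENNReal.ofReal ((2 : ℝ) ^ ((k : ℤ) * l)) * ⨍⁻ y in A, ‖g y‖ₑ ∂μ
      ≤ ENNReal.ofReal ((2 : ℝ) ^ ((k : ℤ) * l))
          * (eLpNorm g (.ofReal p) (μ.restrict A) / μ A ^ (1 / p)) := by
        gcongr
        exact setLAverage_enorm_le_eLpNorm_div hp hA0 (measure_dyadicAnnulus_ne_top μ k l)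
          hg.restrict
    _ ≤ ENNReal.ofReal ((2 : ℝ) ^ ((k : ℤ) * l))
          * (eLpNorm g (.ofReal p) (μ.restrict A) / μ (ball 0 r) ^ (1 / p)) := by
        gcongr _ * (_ / ?_)
        exact ENNReal.rpow_le_rpow (addHaar_ball_le_addHaar_dyadicAnnulus μ k l) (by positivity)
    _ = 2 ^ k / μ (ball 0 1) ^ (1 / p) * eLpNorm g (.ofReal p) (μ.restrict A) := by
        rw [μ.addHaar_ball_rpow_one_div (one_pos.trans_le hp) hd 0 hr, hscale,
          ENNReal.ofReal_mul (by positivity), ENNReal.ofReal_pow zero_le_two, ENNReal.ofReal_ofNat]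
        have hr0 : ENNReal.ofReal (r ^ k) ≠ 0 := by simp [hr]
        rw [mul_comm (2 ^ k), mul_assoc, ← mul_div_assoc, ← mul_div_assoc,
          ENNReal.mul_div_mul_left _ _ hr0 ENNReal.ofReal_ne_top, ENNReal.div_eq_inv_mul,
          ENNReal.div_eq_inv_mul]
        ring

theorem sum_ofReal_two_zpow_mul_setLAverage_dyadicAnnulus_le [Nontrivial E] {k : ℕ} {p : ℝ}
    (hp : 1 ≤ p) (hd : (Module.finrank ℝ E : ℝ) = k * p) {F : Type*} [NormedAddCommGroup F]
    {g : E → F} (hg : AEStronglyMeasurable g μ) (s : Finset ℤ) :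
    ∑ l ∈ s, ENNReal.ofReal ((2 : ℝ) ^ ((k : ℤ) * l)) * ⨍⁻ y in dyadicAnnulus E k l, ‖g y‖ₑ ∂μ
      ≤ 2 ^ k / μ (ball 0 1) ^ (1 / p) * (k + 4) ^ (1 / p) * (#s : ℝ≥0∞) ^ ((p - 1) / p)
        * eLpNorm g (.ofReal p) μ := by
  have hoverlap (y : E) : {l | y ∈ dyadicAnnulus E k l}.encard ≤ ((k + 4 : ℕ) : ℕ∞) := by
    exact_mod_cast encard_setOf_mem_dyadicAnnulus_le k y
  calc _ ≤ ∑ l ∈ s, 2 ^ k / μ (ball 0 1) ^ (1 / p)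
          * eLpNorm g (.ofReal p) (μ.restrict (dyadicAnnulus E k l)) :=
        sum_le_sum fun l _ ↦ ofReal_two_zpow_mul_setLAverage_dyadicAnnulus_le μ hp hd hg l
    _ ≤ 2 ^ k / μ (ball 0 1) ^ (1 / p) * ((#s : ℝ≥0∞) ^ ((p - 1) / p)
          * ((k + 4 : ℕ) : ℝ≥0∞) ^ (1 / p) * eLpNorm g (.ofReal p) μ) := by
        rw [← mul_sum]
        gcongr
        exact sum_eLpNorm_restrict_le hp (measurableSet_dyadicAnnulus k) hoverlap s g
    _ = _ := by push_cast; ring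

theorem sum_two_zpow_mul_setAverage_dyadicAnnulus_le [Nontrivial E] {k : ℕ} {p : ℝ}
    (hp : 1 ≤ p) (hd : (Module.finrank ℝ E : ℝ) = k * p) {g : E → ℝ}
    (hg : MemLp g (.ofReal p) μ) (s : Finset ℤ) :
    ∑ l ∈ s, (2 : ℝ) ^ ((k : ℤ) * l) * ⨍ y in dyadicAnnulus E k l, |g y| ∂μ
      ≤ (2 ^ k / μ (ball 0 1) ^ (1 / p) * (k + 4) ^ (1 / p)).toReal * (#s : ℝ) ^ ((p - 1) / p)
        * (eLpNorm g (.ofReal p) μ).toReal := by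
  have hp0 : 0 < p := one_pos.trans_le hp
  have hq : 0 ≤ (p - 1) / p := div_nonneg (by linarith) hp0.le
  have hbound := sum_ofReal_two_zpow_mul_setLAverage_dyadicAnnulus_le μ hp hd hg.1 s
  have hRHS : 2 ^ k / μ (ball 0 1) ^ (1 / p) * (k + 4) ^ (1 / p) * (#s : ℝ≥0∞) ^ ((p - 1) / p)
      * eLpNorm g (.ofReal p) μ ≠ ∞ := by
    refine ENNReal.mul_ne_top (ENNReal.mul_ne_top ?_ (by simp [hq])) hg.eLpNorm_ne_top
    simp [ENNReal.div_eq_inv_mul, ENNReal.mul_eq_top, ENNReal.rpow_eq_top_iff, hp0.le,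
      (measure_ball_pos μ (0 : E) one_pos).ne']
  calc _ = ∑ l ∈ s, (ENNReal.ofReal ((2 : ℝ) ^ ((k : ℤ) * l))
          * ⨍⁻ y in dyadicAnnulus E k l, ‖g y‖ₑ ∂μ).toReal :=
        sum_congr rfl fun l _ ↦
          (toReal_ofReal_mul_setLAverage_enorm (by positivity) hg.1.restrict).symm
    _ = (∑ l ∈ s, ENNReal.ofReal ((2 : ℝ) ^ ((k : ℤ) * l))
          * ⨍⁻ y in dyadicAnnulus E k l, ‖g y‖ₑ ∂μ).toReal :=
        (ENNReal.toReal_sum (ENNReal.sum_ne_top.1 (ne_top_of_le_ne_top hRHS hbound))).symm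
    _ ≤ _ := ENNReal.toReal_mono hRHS hbound
    _ = _ := by simp [ENNReal.toReal_mul, ← ENNReal.toReal_rpow]

end DyadicAnnulus

theorem annulus_sum_Lp_estimate_general (n k : ℕ) (hn : 1 ≤ n) (p : ℝ)
    (hp : 1 ≤ p) (hnp : (n : ℝ) = (k : ℝ) * p) :
    ∃ C : ℝ, 0 < C ∧
      ∀ (g : EuclideanSpace ℝ (Fin n) → ℝ),
        MemLp g (ENNReal.ofReal p) volume →
        ∀ m₀ : ℕ, 1 ≤ m₀ →
          ∑ l ∈ Finset.Icc (-(m₀ : ℤ)) ((m₀ : ℤ) - 1),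
              (2 : ℝ) ^ ((k : ℤ) * l)
                * ⨍ y in (ball (0 : EuclideanSpace ℝ (Fin n)) ((2 : ℝ) ^ ((k : ℤ) + l + 3))
                    \ ball (0 : EuclideanSpace ℝ (Fin n)) ((2 : ℝ) ^ (l - 1))),
                    |g y| ∂volume
            ≤ C * (m₀ : ℝ) ^ ((p - 1) / p)
              * (eLpNorm g (ENNReal.ofReal p) volume).toReal := by
  have : NeZero n := ⟨by omega⟩
  have hp0 : 0 < p := one_pos.trans_le hp
  have hd : (Module.finrank ℝ (EuclideanSpace ℝ (Fin n)) : ℝ) = k * p := by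
    rwa [finrank_euclideanSpace_fin]
  set C₀ := (2 ^ k / volume (ball (0 : EuclideanSpace ℝ (Fin n)) 1) ^ (1 / p)
    * (k + 4) ^ (1 / p) : ℝ≥0∞).toReal
  have hC₀ : 0 < C₀ := by
    refine ENNReal.toReal_pos ?_ ?_
    · simp [ENNReal.div_eq_inv_mul, ENNReal.rpow_eq_zero_iff, measure_ball_lt_top.ne, hp0.le]
    · simp [ENNReal.div_eq_inv_mul, ENNReal.mul_eq_top, ENNReal.rpow_eq_top_iff, hp0.le,
        (measure_ball_pos volume (0 : EuclideanSpace ℝ (Fin n)) one_pos).ne']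
  refine ⟨C₀ * 2 ^ ((p - 1) / p), by positivity, fun g hg m₀ _ ↦ ?_⟩
  calc _ ≤ C₀ * (#(Icc (-(m₀ : ℤ)) (m₀ - 1)) : ℝ) ^ ((p - 1) / p)
        * (eLpNorm g (.ofReal p) volume).toReal :=
      sum_two_zpow_mul_setAverage_dyadicAnnulus_le volume hp hd hg _
    _ = _ := by
      rw [Int.card_Icc, show ((m₀ : ℤ) - 1 + 1 - -m₀).toNat = 2 * m₀ by omega, Nat.cast_mul,
        Nat.cast_ofNat, Real.mul_rpow zero_le_two (Nat.cast_nonneg _)]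
      ring

/-- Summed annular averages of `|g|` weighted by `2^{kl}` are bounded by
`C m₀^{(p-1)/p} ‖g‖_{L^p}` under the critical scaling `n = kp`. -/
theorem annulus_sum_Lp_estimate (n k : ℕ) (hn : 1 ≤ n) (hk : 1 ≤ k) (p : ℝ)
    (hp : 1 ≤ p) (hnp : (n : ℝ) = (k : ℝ) * p) :
    ∃ C : ℝ, 0 < C ∧
      ∀ (g : EuclideanSpace ℝ (Fin n) → ℝ),
        MemLp g (ENNReal.ofReal p) volume →
        ∀ m₀ : ℕ, 1 ≤ m₀ →
          ∑ l ∈ Finset.Icc (-(m₀ : ℤ)) ((m₀ : ℤ) - 1),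
              (2 : ℝ) ^ ((k : ℤ) * l)
                * ⨍ y in (ball (0 : EuclideanSpace ℝ (Fin n)) ((2 : ℝ) ^ ((k : ℤ) + l + 3))
                    \ ball (0 : EuclideanSpace ℝ (Fin n)) ((2 : ℝ) ^ (l - 1))),
                    |g y| ∂volume
            ≤ C * (m₀ : ℝ) ^ ((p - 1) / p)
              * (eLpNorm g (ENNReal.ofReal p) volume).toReal :=
  annulus_sum_Lp_estimate_general n k hn p hp hnp
end
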